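/- arXiv:2509.02535 — 2 statements merged into one kernel-verified Lean document; each statement's English description precedes it below -/
import Mathlib

section
/- Let M be a full SCM and M' a reduced SCM that share the same data (U1, p1, fX, fY) and (U2, p2, fZ), with the parameter γ of M' equal to P_M(S = 1), and suppose P_M(X = 0, Y = 0) > 0. Then P_{M'}(X = 0, Y = 0) = P_M(X = 0, Y = 0), and the probabilities of sufficiency coincide: P_M(Y_{X=1} = 1, X = 0, Y = 0) / P_M(X = 0, Y = 0) = P_{M'}(Y_{X=1} = 1, X = 0, Y = 0) / P_{M'}(X = 0, Y = 0). -/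
open Finset

attribute [local instance] Classical.propDecidable

/-- A reduced SCM as in the paper: exogenous `U1`, `U2`, a parameter `γ` for the
binary pre-treatment variable `S`, and mechanisms `fX`, `fZ`, `fY`. -/
structure ReducedSCM (U1 U2 : Type) [Fintype U1] [Fintype U2] where
  p1 : U1 → ℝ
  p2 : U2 → ℝ
  gamma : ℝ
  p1_nonneg : ∀ u, 0 ≤ p1 u
  p2_nonneg : ∀ u, 0 ≤ p2 u
  p1_sum : ∑ u, p1 u = 1
  p2_sum : ∑ u, p2 u = 1
  gamma_nonneg : 0 ≤ gamma
  gamma_le_one : gamma ≤ 1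
  fX : U1 → Bool
  fZ : Bool → Bool → U2 → Bool
  fY : Bool → U1 → Bool

namespace ReducedSCM

variable {U1 U2 : Type} [Fintype U1] [Fintype U2]

/-- Probability of a unit `(u1, u2, s)`. -/
def w (M : ReducedSCM U1 U2) (u : U1 × U2 × Bool) : ℝ :=
  M.p1 u.1 * M.p2 u.2.1 * (if u.2.2 then M.gamma else 1 - M.gamma)

/-- Probability of an event. -/
noncomputable def P (M : ReducedSCM U1 U2) (E : U1 × U2 × Bool → Prop) : ℝ :=
  ∑ u, if E u then M.w u else 0

/-- Conditional probability `P(A | B)`. -/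
noncomputable def Pcond (M : ReducedSCM U1 U2) (A B : U1 × U2 × Bool → Prop) : ℝ :=
  M.P (fun u => A u ∧ B u) / M.P B

def S (_M : ReducedSCM U1 U2) (u : U1 × U2 × Bool) : Bool := u.2.2

def X (M : ReducedSCM U1 U2) (u : U1 × U2 × Bool) : Bool := M.fX u.1

def Z (M : ReducedSCM U1 U2) (u : U1 × U2 × Bool) : Bool := M.fZ (M.S u) (M.X u) u.2.1

def Y (M : ReducedSCM U1 U2) (u : U1 × U2 × Bool) : Bool := M.fY (M.Z u) u.1

/-- Potential outcome `Y_{X=x}`. -/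
def Yx (M : ReducedSCM U1 U2) (x : Bool) (u : U1 × U2 × Bool) : Bool :=
  M.fY (M.fZ (M.S u) x u.2.1) u.1

end ReducedSCM

/-- A full SCM as in the paper: exogenous `U1`, `U2`, `U5`, `U6` and mechanisms
`fT`, `fS`, `fX`, `fZ`, `fY`. -/
structure FullSCM (U1 U2 U5 U6 : Type)
    [Fintype U1] [Fintype U2] [Fintype U5] [Fintype U6] where
  p1 : U1 → ℝ
  p2 : U2 → ℝ
  p5 : U5 → ℝ
  p6 : U6 → ℝ
  p1_nonneg : ∀ u, 0 ≤ p1 u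
  p2_nonneg : ∀ u, 0 ≤ p2 u
  p5_nonneg : ∀ u, 0 ≤ p5 u
  p6_nonneg : ∀ u, 0 ≤ p6 u
  p1_sum : ∑ u, p1 u = 1
  p2_sum : ∑ u, p2 u = 1
  p5_sum : ∑ u, p5 u = 1
  p6_sum : ∑ u, p6 u = 1
  fT : U6 → Bool
  fS : Bool → U5 → Bool
  fX : U1 → Bool
  fZ : Bool → Bool → U2 → Bool
  fY : Bool → U1 → Bool

namespace FullSCM

variable {U1 U2 U5 U6 : Type} [Fintype U1] [Fintype U2] [Fintype U5] [Fintype U6]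

/-- Probability of a unit `(u1, u2, u5, u6)`. -/
def w (M : FullSCM U1 U2 U5 U6) (u : U1 × U2 × U5 × U6) : ℝ :=
  M.p1 u.1 * M.p2 u.2.1 * M.p5 u.2.2.1 * M.p6 u.2.2.2

/-- Probability of an event. -/
noncomputable def P (M : FullSCM U1 U2 U5 U6) (E : U1 × U2 × U5 × U6 → Prop) : ℝ :=
  ∑ u, if E u then M.w u else 0

def T (M : FullSCM U1 U2 U5 U6) (u : U1 × U2 × U5 × U6) : Bool := M.fT u.2.2.2

def S (M : FullSCM U1 U2 U5 U6) (u : U1 × U2 × U5 × U6) : Bool := M.fS (M.T u) u.2.2.1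

def X (M : FullSCM U1 U2 U5 U6) (u : U1 × U2 × U5 × U6) : Bool := M.fX u.1

def Z (M : FullSCM U1 U2 U5 U6) (u : U1 × U2 × U5 × U6) : Bool :=
  M.fZ (M.S u) (M.X u) u.2.1

def Y (M : FullSCM U1 U2 U5 U6) (u : U1 × U2 × U5 × U6) : Bool := M.fY (M.Z u) u.1

/-- Potential outcome `Y_{X=x}`. -/
def Yx (M : FullSCM U1 U2 U5 U6) (x : Bool) (u : U1 × U2 × U5 × U6) : Bool :=
  M.fY (M.fZ (M.S u) x u.2.1) u.1

end FullSCM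

/-! In the full SCM the exogenous `(u5, u6)` enter only through `S = fS (fT u6) u5`, which is
independent of `(u1, u2)`. Summing them out therefore turns the law of `(u1, u2, S)` into
`p1 · p2 · Bernoulli(P(S = 1))`, which is the law of the units of the reduced SCM with
`γ = P(S = 1)`. Every event of the sufficiency computation depends on a unit only through
`(u1, u2, S)` and is evaluated by the shared mechanisms, so both probabilities agree. -/

theorem Fintype.sum_bool_comp_mul {α : Type*} [Fintype α] {μ : α → ℝ} (hμ : ∑ a, μ a = 1)
    (s : α → Bool) (f : Bool → ℝ) :
    ∑ a, f (s a) * μ a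
      = f true * (∑ a, if s a then μ a else 0) + f false * (1 - ∑ a, if s a then μ a else 0) := by
  have hsplit : ∀ a, f (s a) * μ a
      = f true * (if s a then μ a else 0) + f false * (μ a - if s a then μ a else 0) := by
    intro a
    cases s a <;> simp
  simp only [hsplit, sum_add_distrib, ← mul_sum, sum_sub_distrib, hμ]

namespace ReducedSCM

variable {U1 U2 : Type} [Fintype U1] [Fintype U2]

theorem P_eq_sum (M : ReducedSCM U1 U2) (E : U1 × U2 × Bool → Prop) :
    M.P E = ∑ u1, ∑ u2, M.p1 u1 * M.p2 u2 *
      ((if E (u1, u2, true) then 1 else 0) * M.gamma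
        + (if E (u1, u2, false) then 1 else 0) * (1 - M.gamma)) := by
  simp only [P, w, Fintype.sum_prod_type, Fintype.sum_bool, if_true, Bool.false_eq_true,
    if_false]
  refine sum_congr rfl fun u1 _ => sum_congr rfl fun u2 _ => ?_
  split_ifs <;> ring

end ReducedSCM

namespace FullSCM

variable {U1 U2 U5 U6 : Type} [Fintype U1] [Fintype U2] [Fintype U5] [Fintype U6]
  (M : FullSCM U1 U2 U5 U6)

def toReducedUnit (u : U1 × U2 × U5 × U6) : U1 × U2 × Bool := (u.1, u.2.1, M.S u)

noncomputable def probS : ℝ :=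
  ∑ r : U5 × U6, if M.fS (M.fT r.2) r.1 then M.p5 r.1 * M.p6 r.2 else 0

theorem sum_p5_mul_p6 : ∑ r : U5 × U6, M.p5 r.1 * M.p6 r.2 = 1 := by
  simp only [Fintype.sum_prod_type, ← Fintype.sum_mul_sum, M.p5_sum, M.p6_sum, one_mul]

theorem P_comp_toReducedUnit (E : U1 × U2 × Bool → Prop) :
    M.P (fun u => E (M.toReducedUnit u)) = ∑ u1, ∑ u2, M.p1 u1 * M.p2 u2 *
      ((if E (u1, u2, true) then 1 else 0) * M.probS
        + (if E (u1, u2, false) then 1 else 0) * (1 - M.probS)) := by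
  rw [P, Fintype.sum_prod_type]
  refine sum_congr rfl fun u1 _ => ?_
  rw [Fintype.sum_prod_type]
  refine sum_congr rfl fun u2 _ => ?_
  rw [probS, ← Fintype.sum_bool_comp_mul M.sum_p5_mul_p6 (fun r => M.fS (M.fT r.2) r.1)
    (fun b => if E (u1, u2, b) then 1 else 0), mul_sum]
  refine sum_congr rfl fun r _ => ?_
  by_cases hE : E (u1, u2, M.fS (M.fT r.2) r.1) <;> simp [toReducedUnit, S, T, w, hE, mul_assoc]

theorem P_S_true_eq_probS : M.P (fun u => M.S u = true) = M.probS := by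
  have h := M.P_comp_toReducedUnit (fun v => v.2.2 = true)
  simp only [toReducedUnit, if_true, one_mul, Bool.false_eq_true, if_false, zero_mul,
    add_zero] at h
  simp only [h, ← sum_mul, ← Fintype.sum_mul_sum, M.p1_sum, M.p2_sum, one_mul]

end FullSCM

section SharedData

variable {U1 U2 U5 U6 : Type} [Fintype U1] [Fintype U2] [Fintype U5] [Fintype U6]
  {M : FullSCM U1 U2 U5 U6} {M' : ReducedSCM U1 U2}

theorem ReducedSCM.P_eq_P_comp_toReducedUnit (hp1 : M'.p1 = M.p1) (hp2 : M'.p2 = M.p2)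
    (hgamma : M'.gamma = M.P (fun u => M.S u = true)) (E : U1 × U2 × Bool → Prop) :
    M'.P E = M.P (fun u => E (M.toReducedUnit u)) := by
  rw [M'.P_eq_sum, M.P_comp_toReducedUnit, hgamma, M.P_S_true_eq_probS, hp1, hp2]

theorem ReducedSCM.X_toReducedUnit (hfX : M'.fX = M.fX) (u : U1 × U2 × U5 × U6) :
    M'.X (M.toReducedUnit u) = M.X u := by
  simp [ReducedSCM.X, FullSCM.X, FullSCM.toReducedUnit, hfX]

theorem ReducedSCM.Y_toReducedUnit (hfX : M'.fX = M.fX) (hfZ : M'.fZ = M.fZ)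
    (hfY : M'.fY = M.fY) (u : U1 × U2 × U5 × U6) :
    M'.Y (M.toReducedUnit u) = M.Y u := by
  simp [ReducedSCM.Y, ReducedSCM.Z, ReducedSCM.X, ReducedSCM.S, FullSCM.Y, FullSCM.Z,
    FullSCM.X, FullSCM.toReducedUnit, hfX, hfZ, hfY]

theorem ReducedSCM.Yx_toReducedUnit (hfZ : M'.fZ = M.fZ) (hfY : M'.fY = M.fY) (x : Bool)
    (u : U1 × U2 × U5 × U6) :
    M'.Yx x (M.toReducedUnit u) = M.Yx x u := by
  simp [ReducedSCM.Yx, ReducedSCM.S, FullSCM.Yx, FullSCM.toReducedUnit, hfZ, hfY]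

end SharedData

theorem full_reduced_same_PS_general
    {U1 U2 U5 U6 : Type} [Fintype U1] [Fintype U2] [Fintype U5] [Fintype U6]
    (M : FullSCM U1 U2 U5 U6) (M' : ReducedSCM U1 U2)
    (hp1 : M'.p1 = M.p1) (hp2 : M'.p2 = M.p2)
    (hfX : M'.fX = M.fX) (hfZ : M'.fZ = M.fZ) (hfY : M'.fY = M.fY)
    (hgamma : M'.gamma = M.P (fun u => M.S u = true)) :
    M'.P (fun u => M'.X u = false ∧ M'.Y u = false)
        = M.P (fun u => M.X u = false ∧ M.Y u = false) ∧
    M.P (fun u => M.Yx true u = true ∧ M.X u = false ∧ M.Y u = false)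
        / M.P (fun u => M.X u = false ∧ M.Y u = false)
      = M'.P (fun u => M'.Yx true u = true ∧ M'.X u = false ∧ M'.Y u = false)
        / M'.P (fun u => M'.X u = false ∧ M'.Y u = false) := by
  have hP := ReducedSCM.P_eq_P_comp_toReducedUnit hp1 hp2 hgamma
  have hX := ReducedSCM.X_toReducedUnit hfX
  have hY := ReducedSCM.Y_toReducedUnit hfX hfZ hfY
  have hYx := ReducedSCM.Yx_toReducedUnit hfZ hfY
  have hXY : M'.P (fun u => M'.X u = false ∧ M'.Y u = false)
      = M.P (fun u => M.X u = false ∧ M.Y u = false) := by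
    simp only [hP, hX, hY]
  have hSuff : M'.P (fun u => M'.Yx true u = true ∧ M'.X u = false ∧ M'.Y u = false)
      = M.P (fun u => M.Yx true u = true ∧ M.X u = false ∧ M.Y u = false) := by
    simp only [hP, hX, hY, hYx]
  exact ⟨hXY, by rw [hXY, hSuff]⟩

/-- A full SCM `M` and a reduced SCM `M'` sharing the data
`(U1, p1, fX, fY)` and `(U2, p2, fZ)`, with `γ = P_M(S = 1)` and
`P_M(X = 0, Y = 0) > 0`, give the same `P(X = 0, Y = 0)` and the same
probability of sufficiency. -/
theorem full_reduced_same_PS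
    {U1 U2 U5 U6 : Type} [Fintype U1] [Fintype U2] [Fintype U5] [Fintype U6]
    (M : FullSCM U1 U2 U5 U6) (M' : ReducedSCM U1 U2)
    (hp1 : M'.p1 = M.p1) (hp2 : M'.p2 = M.p2)
    (hfX : M'.fX = M.fX) (hfZ : M'.fZ = M.fZ) (hfY : M'.fY = M.fY)
    (hgamma : M'.gamma = M.P (fun u => M.S u = true))
    (hpos : 0 < M.P (fun u => M.X u = false ∧ M.Y u = false)) :
    M'.P (fun u => M'.X u = false ∧ M'.Y u = false)
        = M.P (fun u => M.X u = false ∧ M.Y u = false) ∧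
    M.P (fun u => M.Yx true u = true ∧ M.X u = false ∧ M.Y u = false)
        / M.P (fun u => M.X u = false ∧ M.Y u = false)
      = M'.P (fun u => M'.Yx true u = true ∧ M'.X u = false ∧ M'.Y u = false)
        / M'.P (fun u => M'.X u = false ∧ M'.Y u = false) :=
  full_reduced_same_PS_general M M' hp1 hp2 hfX hfZ hfY hgamma
end

section
/- In any front-door SCM with P(X = x, Z = z) > 0 for all x, z ∈ {0,1}, the weak probability of necessity is identified by the front-door formula: P(Y = 0 | do(X = 0)) = Σ_{z ∈ {0,1}} P(Z = z | X = 0) · Σ_{x ∈ {0,1}} P(Y = 0 | X = x, Z = z) · P(X = x). -/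
/-! Since a unit is drawn from the product distribution `p1 ⊗ p2`, every event in the formula splits
into a `U1`-part and a `U2`-part and its probability factors accordingly. This gives
`P(Z = z | X = x) = P₂(fZ x · = z)` and `P(Y = y | X = x, Z = z) · P(X = x) = P₁(fX · = x, fY z · = y)`;
summing the latter over `x` leaves `P₁(fY z · = y)`, and `P(Y = y | do(X = x))` is
`∑_z P₂(fZ x · = z) · P₁(fY z · = y)` by conditioning on the value of `fZ x`. -/

open Finset

attribute [local instance] Classical.propDecidable

/-- A front-door SCM (Pearl's Smoking/Tar/Cancer example): exogenous `U1`
confounding `X` and `Y`, exogenous `U2` for `Z`, mechanisms `fX`, `fZ`, `fY`. -/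
structure FrontdoorSCM (U1 U2 : Type) [Fintype U1] [Fintype U2] where
  p1 : U1 → ℝ
  p2 : U2 → ℝ
  p1_nonneg : ∀ u, 0 ≤ p1 u
  p2_nonneg : ∀ u, 0 ≤ p2 u
  p1_sum : ∑ u, p1 u = 1
  p2_sum : ∑ u, p2 u = 1
  fX : U1 → Bool
  fZ : Bool → U2 → Bool
  fY : Bool → U1 → Bool

namespace FrontdoorSCM

variable {U1 U2 : Type} [Fintype U1] [Fintype U2]

/-- Probability of a unit `(u1, u2)`. -/
def w (M : FrontdoorSCM U1 U2) (u : U1 × U2) : ℝ := M.p1 u.1 * M.p2 u.2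

/-- Observational probability of an event. -/
noncomputable def P (M : FrontdoorSCM U1 U2) (E : U1 × U2 → Prop) : ℝ :=
  ∑ u, if E u then M.w u else 0

/-- Conditional probability `P(A | B)`. -/
noncomputable def Pcond (M : FrontdoorSCM U1 U2) (A B : U1 × U2 → Prop) : ℝ :=
  M.P (fun u => A u ∧ B u) / M.P B

def X (M : FrontdoorSCM U1 U2) (u : U1 × U2) : Bool := M.fX u.1

def Z (M : FrontdoorSCM U1 U2) (u : U1 × U2) : Bool := M.fZ (M.X u) u.2

def Y (M : FrontdoorSCM U1 U2) (u : U1 × U2) : Bool := M.fY (M.Z u) u.1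

/-- Interventional probability `P(Y = y | do(X = x))`. -/
noncomputable def Pdo (M : FrontdoorSCM U1 U2) (x y : Bool) : ℝ :=
  ∑ u : U1 × U2, if M.fY (M.fZ x u.2) u.1 = y then M.w u else 0

end FrontdoorSCM

namespace FrontdoorSCM

section mass

variable {α β γ : Type} [Fintype α] [Fintype β] [Fintype γ]

noncomputable def mass (w : α → ℝ) (E : α → Prop) : ℝ :=
  ∑ a, if E a then w a else 0

theorem mass_congr (w : α → ℝ) {E F : α → Prop} (h : ∀ a, E a ↔ F a) :
    mass w E = mass w F := by
  rw [funext fun a => propext (h a)]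

theorem mass_true (w : α → ℝ) : mass w (fun _ => True) = ∑ a, w a := by
  simp [mass]

theorem mass_eq_sum_fiber (w : α → ℝ) (E : α → Prop) (g : α → γ) :
    mass w E = ∑ c, mass w (fun a => E a ∧ g a = c) := by
  unfold mass
  rw [Finset.sum_comm]
  refine Finset.sum_congr rfl fun a _ => ?_
  by_cases hE : E a <;> simp [hE]

theorem mass_prod (w : α → ℝ) (v : β → ℝ) (A : α → Prop) (B : β → Prop) :
    mass (fun p : α × β => w p.1 * v p.2) (fun p => A p.1 ∧ B p.2) = mass w A * mass v B := by
  simp only [mass, Finset.sum_mul_sum, ← Finset.univ_product_univ, Finset.sum_product]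
  refine Finset.sum_congr rfl fun a _ => Finset.sum_congr rfl fun b _ => ?_
  split_ifs <;> simp_all

end mass

variable {U1 U2 : Type} [Fintype U1] [Fintype U2] (M : FrontdoorSCM U1 U2)

theorem P_congr {E F : U1 × U2 → Prop} (h : ∀ u, E u ↔ F u) : M.P E = M.P F :=
  mass_congr M.w h

theorem P_prod (A : U1 → Prop) (B : U2 → Prop) :
    M.P (fun u => A u.1 ∧ B u.2) = mass M.p1 A * mass M.p2 B :=
  mass_prod M.p1 M.p2 A B

theorem P_X_eq (x : Bool) : M.P (fun u => M.X u = x) = mass M.p1 (fun u1 => M.fX u1 = x) := by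
  have h := M.P_prod (fun u1 => M.fX u1 = x) (fun _ => True)
  rw [mass_true, M.p2_sum, mul_one] at h
  rw [← h]
  exact M.P_congr fun u => by simp [X]

theorem P_XZ_eq (x z : Bool) :
    M.P (fun u => M.X u = x ∧ M.Z u = z)
      = mass M.p1 (fun u1 => M.fX u1 = x) * mass M.p2 (fun u2 => M.fZ x u2 = z) := by
  rw [← P_prod]
  exact M.P_congr fun u => by simp only [Z, X]; constructor <;> rintro ⟨rfl, h⟩ <;> exact ⟨rfl, h⟩

theorem P_YXZ_eq (x y z : Bool) :
    M.P (fun u => M.Y u = y ∧ M.X u = x ∧ M.Z u = z)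
      = mass M.p1 (fun u1 => M.fX u1 = x ∧ M.fY z u1 = y)
        * mass M.p2 (fun u2 => M.fZ x u2 = z) := by
  rw [← P_prod]
  exact M.P_congr fun u => by
    simp only [Y, Z, X]; constructor <;> rintro ⟨h1, h2, h3⟩ <;> subst_vars <;> simp_all

theorem P_eq_sum_fiber {γ : Type} [Fintype γ] (E : U1 × U2 → Prop) (g : U1 × U2 → γ) :
    M.P E = ∑ c, M.P (fun u => E u ∧ g u = c) :=
  mass_eq_sum_fiber M.w E g

theorem Pdo_eq_P (x y : Bool) : M.Pdo x y = M.P (fun u => M.fY (M.fZ x u.2) u.1 = y) := by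
  unfold Pdo P
  congr!

theorem Pdo_eq_sum (x y : Bool) :
    M.Pdo x y = ∑ z, mass M.p2 (fun u2 => M.fZ x u2 = z) * mass M.p1 (fun u1 => M.fY z u1 = y) := by
  rw [Pdo_eq_P, M.P_eq_sum_fiber _ fun u => M.fZ x u.2]
  refine Finset.sum_congr rfl fun z _ => ?_
  rw [mul_comm, ← P_prod]
  exact M.P_congr fun u => by constructor <;> rintro ⟨h1, h2⟩ <;> simp_all

theorem Pcond_Z_X_eq {x z : Bool} (hXZ : M.P (fun u => M.X u = x ∧ M.Z u = z) ≠ 0) :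
    M.Pcond (fun u => M.Z u = z) (fun u => M.X u = x) = mass M.p2 (fun u2 => M.fZ x u2 = z) := by
  rw [P_XZ_eq] at hXZ
  have hswap : M.P (fun u => M.Z u = z ∧ M.X u = x) = M.P (fun u => M.X u = x ∧ M.Z u = z) :=
    M.P_congr fun u => and_comm
  rw [Pcond, hswap, P_XZ_eq, P_X_eq,
    mul_div_cancel_left₀ _ (left_ne_zero_of_mul hXZ)]

theorem Pcond_Y_XZ_mul_P_X {x y z : Bool} (hXZ : M.P (fun u => M.X u = x ∧ M.Z u = z) ≠ 0) :
    M.Pcond (fun u => M.Y u = y) (fun u => M.X u = x ∧ M.Z u = z) * M.P (fun u => M.X u = x)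
      = mass M.p1 (fun u1 => M.fX u1 = x ∧ M.fY z u1 = y) := by
  rw [P_XZ_eq] at hXZ
  rw [Pcond, P_YXZ_eq, P_XZ_eq, P_X_eq, mul_div_mul_right _ _ (right_ne_zero_of_mul hXZ),
    div_mul_cancel₀ _ (left_ne_zero_of_mul hXZ)]

end FrontdoorSCM

/-- In any front-door SCM with `P(X = x, Z = z) > 0` for all
`x, z`, the weak probability of necessity is identified by the front-door
formula:
`P(Y = 0 | do(X = 0)) = Σ_z P(Z = z | X = 0) · Σ_x P(Y = 0 | X = x, Z = z) · P(X = x)`. -/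
theorem frontdoor_wPN {U1 U2 : Type} [Fintype U1] [Fintype U2]
    (M : FrontdoorSCM U1 U2)
    (hpos : ∀ x z : Bool, 0 < M.P (fun u => M.X u = x ∧ M.Z u = z)) :
    M.Pdo false false
      = ∑ z : Bool,
          M.Pcond (fun u => M.Z u = z) (fun u => M.X u = false)
            * ∑ x : Bool,
                M.Pcond (fun u => M.Y u = false) (fun u => M.X u = x ∧ M.Z u = z)
                  * M.P (fun u => M.X u = x) := by
  rw [M.Pdo_eq_sum]
  refine Finset.sum_congr rfl fun z _ => ?_
  rw [M.Pcond_Z_X_eq (hpos false z).ne', FrontdoorSCM.mass_eq_sum_fiber _ _ M.fX]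
  congr 1
  refine Finset.sum_congr rfl fun x _ => ?_
  rw [M.Pcond_Y_XZ_mul_P_X (hpos x z).ne']
  exact FrontdoorSCM.mass_congr _ fun u1 => and_comm
end
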